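/- arXiv:2005.00297 — 4 statements merged into one kernel-verified Lean document; each statement's English description precedes it below -/
import Mathlib

section
/- Let W be the graph on vertices v_0, v_1, ..., v_5 where v_1 v_2 v_3 v_4 v_5 form a cycle with every cycle edge doubled, and v_0 is joined to each v_i (1 ≤ i ≤ 5) by a single edge. Then for any orientation D of W in which every vertex has outdegree congruent to indegree modulo 3, there exists k with 1 ≤ k ≤ 5 such that the edge v_0 v_k is oriented differently at v_k from the other four edges incident with v_k (i.e., v_0 v_k is the unique edge among the five edges at v_k whose direction at v_k differs from the other four). -/
open Finset

/-- A finite multigraph without loops: each edge `e` has two distinct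
endpoints `fst e` and `snd e`.  An orientation is a map `D : E → Bool`,
where `D e = true` means `e` is directed from `fst e` to `snd e`. -/
structure Multigraph (V : Type) (E : Type) where
  fst : E → V
  snd : E → V
  no_loop : ∀ e, fst e ≠ snd e

namespace Multigraph

variable {V E : Type} [Fintype V] [DecidableEq V] [Fintype E] [DecidableEq E]

/-- The tail (initial vertex) of edge `e` under orientation `D`. -/
def tail (G : Multigraph V E) (D : E → Bool) (e : E) : V :=
  if D e then G.fst e else G.snd e

/-- The head (terminal vertex) of edge `e` under orientation `D`. -/
def head (G : Multigraph V E) (D : E → Bool) (e : E) : V :=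
  if D e then G.snd e else G.fst e

/-- Outdegree `d⁺_D(v)` (as an integer, for convenience). -/
def outDeg (G : Multigraph V E) (D : E → Bool) (v : V) : ℤ :=
  ((univ.filter fun e => G.tail D e = v).card : ℤ)

/-- Indegree `d⁻_D(v)`. -/
def inDeg (G : Multigraph V E) (D : E → Bool) (v : V) : ℤ :=
  ((univ.filter fun e => G.head D e = v).card : ℤ)

/-- `e` is incident with `v`. -/
def Incident (G : Multigraph V E) (v : V) (e : E) : Prop :=
  G.fst e = v ∨ G.snd e = v

instance (G : Multigraph V E) (v : V) : DecidablePred (G.Incident v) := fun e =>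
  inferInstanceAs (Decidable (G.fst e = v ∨ G.snd e = v))

/-- The degree of a vertex. -/
def degree (G : Multigraph V E) (v : V) : ℕ :=
  (univ.filter fun e => G.Incident v e).card

/-- The edge-cut `∂_G(A)`: edges with exactly one endpoint in `A`. -/
def cut (G : Multigraph V E) (A : Finset V) : Finset E :=
  univ.filter fun e => ¬ ((G.fst e ∈ A) ↔ (G.snd e ∈ A))

/-- `G` is `k`-edge-connected: every edge-cut has at least `k` edges. -/
def EdgeConnected (G : Multigraph V E) (k : ℕ) : Prop :=
  ∀ A : Finset V, A.Nonempty → A ≠ univ → k ≤ (G.cut A).card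

/-- A boundary function: values in `ℤ₃` summing to `0`. -/
def IsBoundary (β : V → ZMod 3) : Prop := ∑ v, β v = 0

/-- `D` is a `β`-orientation: `d⁺(v) - d⁻(v) ≡ β v (mod 3)` at every vertex. -/
def IsBetaOrientation (G : Multigraph V E) (β : V → ZMod 3) (D : E → Bool) : Prop :=
  ∀ v : V, ((G.outDeg D v - G.inDeg D v : ℤ) : ZMod 3) = β v

/-- A mod 3-orientation: `d⁺(v) ≡ d⁻(v) (mod 3)` at every vertex. -/
def IsMod3Orientation (G : Multigraph V E) (D : E → Bool) : Prop :=
  ∀ v : V, ((G.outDeg D v - G.inDeg D v : ℤ) : ZMod 3) = 0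

/-- `G` admits a mod 3-orientation (equivalently, a nowhere-zero 3-flow). -/
def Mod3Orientable (G : Multigraph V E) : Prop := ∃ D, G.IsMod3Orientation D

/-- `G` is `ℤ₃`-connected. -/
def Z3Connected (G : Multigraph V E) : Prop :=
  ∀ β : V → ZMod 3, IsBoundary β → ∃ D, G.IsBetaOrientation β D

/-- `G` is `ℤ₃`-extendable at `x`: every pre-orientation of the edges at `x`
compatible with `β x` extends to a `β`-orientation of `G`. -/
def Z3ExtendableAt (G : Multigraph V E) (x : V) : Prop :=
  ∀ β : V → ZMod 3, IsBoundary β →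
    ∀ D₀ : E → Bool, ((G.outDeg D₀ x - G.inDeg D₀ x : ℤ) : ZMod 3) = β x →
      ∃ D : E → Bool, (∀ e, G.Incident x e → D e = D₀ e) ∧ G.IsBetaOrientation β D

/-- `G` is mod-3-extendable at `x`: every pre-orientation of `∂(x)` with
`d⁺(x) ≡ d⁻(x) (mod 3)` extends to a mod 3-orientation of `G`. -/
def Mod3ExtendableAt (G : Multigraph V E) (x : V) : Prop :=
  ∀ D₀ : E → Bool, ((G.outDeg D₀ x - G.inDeg D₀ x : ℤ) : ZMod 3) = 0 →
    ∃ D : E → Bool, (∀ e, G.Incident x e → D e = D₀ e) ∧ G.IsMod3Orientation D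

/-- `A` is a `k`-critical-set: `d(A) ≤ k` but every nonempty proper subset has
larger boundary. -/
def CriticalSet (G : Multigraph V E) (k : ℕ) (A : Finset V) : Prop :=
  A.Nonempty ∧ A ≠ univ ∧ (G.cut A).card ≤ k ∧
    ∀ B : Finset V, B.Nonempty → B ⊂ A → k < (G.cut B).card

/-- The set of edge-cuts of size exactly `k` (as sets of edges). -/
def kCuts (G : Multigraph V E) (k : ℕ) : Finset (Finset E) :=
  ((univ : Finset (Finset V)).filter
    fun A => A.Nonempty ∧ A ≠ univ ∧ (G.cut A).card = k).image G.cut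


/-- The graph `W`: a 5-cycle `v₁v₂v₃v₄v₅` with all cycle edges doubled, plus a
hub `v₀` joined to each `vᵢ` by a single edge. -/
def W : Multigraph (Fin 6) (Fin 15) where
  fst := ![1, 1, 2, 2, 3, 3, 4, 4, 5, 5, 0, 0, 0, 0, 0]
  snd := ![2, 2, 3, 3, 4, 4, 5, 5, 1, 1, 1, 2, 3, 4, 5]
  no_loop := by decide

/-- `e` is the minor-edge at `v` under `D`: it is incident with `v` and its
direction at `v` differs from that of every other edge incident with `v`. -/
def MinorEdgeAt (G : Multigraph V E) (D : E → Bool) (v : V) (e : E) : Prop :=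
  G.Incident v e ∧ ∀ f : E, G.Incident v f → f ≠ e →
    ¬ ((G.head D f = v) ↔ (G.head D e = v))

end Multigraph

/-! In a mod 3-orientation of a 5-regular graph every vertex has out-degree 1 or 4, and an edge
pointing the minority way at a vertex is the minor-edge there. So if no spoke `v₀vₖ` is the
minor-edge at `vₖ`, then `vₖ` has out-degree 1 when the spoke enters it and 4 when it leaves it,
while the out-degree of `v₀` counts the spokes entering the `vₖ`. Each spoke then contributes 2 or 4
to the total out-degree, which would be even; but it is `|E(W)| = 15`. -/

namespace Multigraph

section Orientation

variable {V E : Type} (G : Multigraph V E) (D : E → Bool) {v : V} {e : E}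

lemma tail_ne_head (e : E) : G.tail D e ≠ G.head D e := by
  unfold tail head
  cases D e
  · exact (G.no_loop e).symm
  · exact G.no_loop e

lemma incident_iff_tail_or_head : G.Incident v e ↔ G.tail D e = v ∨ G.head D e = v := by
  unfold Incident tail head
  cases D e <;> simp [or_comm]

lemma head_eq_snd_iff : G.head D e = G.snd e ↔ D e = true := by
  unfold head
  cases D e <;> simp [G.no_loop e]

lemma tail_eq_snd_iff : G.tail D e = G.snd e ↔ D e = false := by
  unfold tail
  cases D e <;> simp [G.no_loop e]

variable [DecidableEq V] [Fintype E]

lemma sum_outDeg [Fintype V] : ∑ v, G.outDeg D v = Fintype.card E := by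
  have := card_eq_sum_card_fiberwise (f := G.tail D) (s := univ) (t := univ)
    (fun _ _ => mem_coe.2 (mem_univ _))
  simp only [outDeg, card_univ] at this ⊢
  exact_mod_cast this.symm

lemma outDeg_add_inDeg (v : V) : G.outDeg D v + G.inDeg D v = G.degree v := by
  classical
  have hdisj : Disjoint (univ.filter fun e => G.tail D e = v)
      (univ.filter fun e => G.head D e = v) :=
    disjoint_filter.2 fun e _ ht hh => G.tail_ne_head D e (ht.trans hh.symm)
  have hunion : univ.filter (G.Incident v) =
      (univ.filter fun e => G.tail D e = v) ∪ univ.filter fun e => G.head D e = v := by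
    rw [← filter_or]
    exact filter_congr fun e _ => G.incident_iff_tail_or_head D
  simp only [outDeg, inDeg, degree, hunion, card_union_of_disjoint hdisj, Nat.cast_add]

lemma outDeg_eq_one_or_inDeg_eq_one (h5 : G.degree v = 5)
    (hv : ((G.outDeg D v - G.inDeg D v : ℤ) : ZMod 3) = 0) :
    G.outDeg D v = 1 ∨ G.inDeg D v = 1 := by
  have hsum := G.outDeg_add_inDeg D v
  have hdvd := (ZMod.intCast_zmod_eq_zero_iff_dvd _ 3).1 hv
  have hout : 0 ≤ G.outDeg D v := Nat.cast_nonneg _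
  have hin : 0 ≤ G.inDeg D v := Nat.cast_nonneg _
  rw [h5] at hsum
  push_cast at hsum hdvd
  omega

lemma minorEdgeAt_of_head_eq (he : G.head D e = v) (hin : G.inDeg D v = 1) :
    MinorEdgeAt G D v e := by
  refine ⟨(G.incident_iff_tail_or_head D).2 (Or.inr he), fun f _ hfe hf => hfe ?_⟩
  have hcard : (univ.filter fun e => G.head D e = v).card ≤ 1 := by
    simp only [inDeg] at hin
    omega
  exact card_le_one.1 hcard f (by simpa [he] using hf) e (by simpa using he)

lemma minorEdgeAt_of_tail_eq (he : G.tail D e = v) (hout : G.outDeg D v = 1) :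
    MinorEdgeAt G D v e := by
  refine ⟨(G.incident_iff_tail_or_head D).2 (Or.inl he), fun f hf hfe => ?_⟩
  have hcard : (univ.filter fun e => G.tail D e = v).card ≤ 1 := by
    simp only [outDeg] at hout
    omega
  have hft : G.tail D f ≠ v := fun hft =>
    hfe (card_le_one.1 hcard f (by simpa using hft) e (by simpa using he))
  have hfh : G.head D f = v := ((G.incident_iff_tail_or_head D).1 hf).resolve_left hft
  have heh : G.head D e ≠ v := fun h => G.tail_ne_head D e (he.trans h.symm)
  simp [hfh, heh]

lemma outDeg_snd_of_not_minorEdgeAt (h5 : G.degree (G.snd e) = 5)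
    (hv : ((G.outDeg D (G.snd e) - G.inDeg D (G.snd e) : ℤ) : ZMod 3) = 0)
    (hmin : ¬ MinorEdgeAt G D (G.snd e) e) :
    G.outDeg D (G.snd e) = if D e then 1 else 4 := by
  have hsum := G.outDeg_add_inDeg D (G.snd e)
  rw [h5] at hsum
  cases hD : D e
  · have hout : G.outDeg D (G.snd e) ≠ 1 :=
      fun h => hmin (G.minorEdgeAt_of_tail_eq D ((G.tail_eq_snd_iff D).2 hD) h)
    have := (G.outDeg_eq_one_or_inDeg_eq_one D h5 hv).resolve_left hout
    push_cast at hsum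
    simp only [Bool.false_eq_true, if_false]
    omega
  · have hin : G.inDeg D (G.snd e) ≠ 1 :=
      fun h => hmin (G.minorEdgeAt_of_head_eq D ((G.head_eq_snd_iff D).2 hD) h)
    simpa using (G.outDeg_eq_one_or_inDeg_eq_one D h5 hv).resolve_right hin

end Orientation

lemma W_degree (v : Fin 6) : W.degree v = 5 := by
  revert v
  decide

lemma W_snd_spoke (i : Fin 5) : W.snd (Fin.natAdd 10 i) = i.succ := by
  revert i
  decide

lemma W_outDeg_zero (D : Fin 15 → Bool) :
    W.outDeg D 0 = ∑ i : Fin 5, if D (Fin.natAdd 10 i) then 1 else 0 := by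
  have hcycle : ∀ i : Fin 10, W.fst (Fin.castAdd 5 i) ≠ 0 ∧ W.snd (Fin.castAdd 5 i) ≠ 0 := by
    decide
  have hspoke : ∀ i : Fin 5, W.fst (Fin.natAdd 10 i) = 0 ∧ W.snd (Fin.natAdd 10 i) ≠ 0 := by
    decide
  rw [outDeg, card_filter, Fin.sum_univ_add (a := 10) (b := 5)]
  push_cast
  simp only [tail, apply_ite (· = (0 : Fin 6)), (hcycle _).1, (hcycle _).2, (hspoke _).1,
    (hspoke _).2, ite_self, if_false, if_false_right, and_true, sum_const_zero, zero_add]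

/-- In any mod 3-orientation `D` of `W` there is some `k` with `1 ≤ k ≤ 5`
such that the spoke `v₀vₖ` is the minor-edge at `vₖ`. -/
theorem stmt_1 (D : Fin 15 → Bool) (hD : W.IsMod3Orientation D) :
    ∃ i : Fin 5,
      MinorEdgeAt W D ⟨i.1 + 1, by have := i.isLt; omega⟩
        ⟨10 + i.1, by have := i.isLt; omega⟩ := by
  by_contra! hmin
  have hrim : ∀ i : Fin 5, W.outDeg D i.succ = if D (Fin.natAdd 10 i) then 1 else 4 := by
    intro i
    rw [← W_snd_spoke i]
    exact W.outDeg_snd_of_not_minorEdgeAt D (W_degree _) (hD _)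
      (by rw [W_snd_spoke]; exact hmin i)
  have htotal := W.sum_outDeg D
  rw [Fin.sum_univ_succ, W_outDeg_zero, Fintype.card_fin] at htotal
  simp only [hrim, ← sum_add_distrib] at htotal
  have heven : ∀ b : Bool,
      ((if b then 1 else 0) + (if b then 1 else 4) : ℤ) = 2 * if b then 1 else 2 := by
    decide
  simp only [heven, ← mul_sum] at htotal
  omega

end Multigraph
end

section
/- Let G be a k-edge-connected graph and let A_1, ..., A_t be distinct vertex subsets such that each A_i is a k-critical-set (that is, d(A_i) ≤ k but d(B) > k for every nonempty proper subset B of A_i). Then A_i and A_j are disjoint for all i ≠ j. -/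
open Finset

namespace Multigraph

variable {V E : Type} [DecidableEq V] [Fintype E]

/-! Two intersecting critical sets cannot be nested, since a critical set has no proper
critical subset; otherwise both differences are nonempty proper subsets, so
`d(A₁ \ A₂) + d(A₂ \ A₁) > 2k ≥ d(A₁) + d(A₂)`, contradicting posimodularity of the cut function. -/

/-- Posimodularity: each edge is counted at least as often on the right as on the left. -/
theorem card_cut_sdiff_add_card_cut_sdiff_le (G : Multigraph V E) (A B : Finset V) :
    #(G.cut (A \ B)) + #(G.cut (B \ A)) ≤ #(G.cut A) + #(G.cut B) := by
  simp only [cut, card_filter, ← sum_add_distrib]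
  refine sum_le_sum fun e _ => ?_
  by_cases hA₁ : G.fst e ∈ A <;> by_cases hA₂ : G.snd e ∈ A <;>
    by_cases hB₁ : G.fst e ∈ B <;> by_cases hB₂ : G.snd e ∈ B <;>
    simp [hA₁, hA₂, hB₁, hB₂]

variable [Fintype V] {G : Multigraph V E} {k : ℕ} {A B : Finset V}

theorem CriticalSet.not_ssubset (hA : G.CriticalSet k A) (hB : G.CriticalSet k B) : ¬ A ⊂ B :=
  fun hAB => (hB.2.2.2 A hA.1 hAB).not_ge hA.2.2.1

theorem CriticalSet.lt_card_cut_sdiff (hA : G.CriticalSet k A) (hAB : ¬ A ⊆ B)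
    (hdisj : ¬ Disjoint A B) : k < #(G.cut (A \ B)) := by
  refine hA.2.2.2 _ (sdiff_nonempty.mpr hAB) (Finset.ssubset_iff_subset_ne.mpr ⟨sdiff_subset, ?_⟩)
  obtain ⟨x, hxA, hxB⟩ := not_disjoint_iff.mp hdisj
  exact fun h => (mem_sdiff.mp (h ▸ hxA)).2 hxB

theorem stmt_5_general {V E : Type} [Fintype V] [DecidableEq V] [Fintype E] (G : Multigraph V E) (k : ℕ)
    {A₁ A₂ : Finset V}
    (h1 : G.CriticalSet k A₁) (h2 : G.CriticalSet k A₂) (hne : A₁ ≠ A₂) :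
    Disjoint A₁ A₂ := by
  by_contra hdisj
  have h12 : ¬ A₁ ⊆ A₂ := fun h => h1.not_ssubset h2 (h.ssubset_of_ne hne)
  have h21 : ¬ A₂ ⊆ A₁ := fun h => h2.not_ssubset h1 (h.ssubset_of_ne hne.symm)
  have hd₁ := h1.lt_card_cut_sdiff h12 hdisj
  have hd₂ := h2.lt_card_cut_sdiff h21 (disjoint_comm.not.mp hdisj)
  have hposi := card_cut_sdiff_add_card_cut_sdiff_le G A₁ A₂
  have hA₁ := h1.2.2.1
  have hA₂ := h2.2.2.1
  omega

/-- Distinct `k`-critical-sets of a `k`-edge-connected graph are disjoint. -/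
theorem stmt_5 {V E : Type} [Fintype V] [DecidableEq V] [Fintype E] [DecidableEq E] (G : Multigraph V E) (k : ℕ)
    (hG : G.EdgeConnected k) {A₁ A₂ : Finset V}
    (h1 : G.CriticalSet k A₁) (h2 : G.CriticalSet k A₂) (hne : A₁ ≠ A₂) :
    Disjoint A₁ A₂ :=
  stmt_5_general G k h1 h2 hne

end Multigraph
end

section
/- Let G be a k-edge-connected graph and let A_1, ..., A_t be all distinct k-critical-sets of G. Construct G' from G by adding a new vertex x joined by one new edge to a vertex in each A_i (i = 1, ..., t). Then every edge-cut of G' other than ∂_{G'}(x) has size at least k+1. -/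
/-!
Up to complementation, a cut of `G'` other than `∂(x)` is `∂_{G'}(B)` for a nonempty proper
`B ⊆ V(G)`, and its size is `d_G(B)` plus the number of new edges ending in `B`. Since
`d_G(B) ≥ k`, only `d_G(B) = k` needs care; then an inclusion-minimal nonempty subset of `B` with
boundary at most `k` is a `k`-critical set, so one of the new edges ends in `B`.
-/

open Finset

namespace Multigraph

variable {V E : Type} [Fintype V] [DecidableEq V] [Fintype E] [DecidableEq E]

/-- Add a new vertex (`none`) to `G`, joined by one new edge to `r i` for each
`i : Fin t`. -/
def addVertex (G : Multigraph V E) {t : ℕ} (r : Fin t → V) :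
    Multigraph (Option V) (E ⊕ Fin t) where
  fst := Sum.elim (fun e => some (G.fst e)) fun _ => none
  snd := Sum.elim (fun e => some (G.snd e)) fun i => some (r i)
  no_loop := by
    rintro (e | i) h
    · exact G.no_loop e (Option.some_injective V h)
    · simp at h

end Multigraph

namespace Multigraph

variable {V E : Type} [DecidableEq V] [Fintype E]

theorem cut_compl [Fintype V] (G : Multigraph V E) (A : Finset V) : G.cut Aᶜ = G.cut A := by
  ext e
  simp only [cut, mem_filter, mem_univ, true_and, mem_compl, not_iff_not]

theorem cut_addVertex_map_some (G : Multigraph V E) {t : ℕ} (r : Fin t → V) (B : Finset V) :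
    (G.addVertex r).cut (B.map .some) = (G.cut B).disjSum {i | r i ∈ B} := by
  ext (e | i) <;> simp [cut, addVertex]

theorem exists_criticalSet_subset [Fintype V] (G : Multigraph V E) (k : ℕ) {B : Finset V}
    (hB : B.Nonempty) (hBu : B ≠ univ) (hBk : #(G.cut B) ≤ k) :
    ∃ A ⊆ B, G.CriticalSet k A := by
  induction B using Finset.strongInduction with
  | H B ih =>
    by_cases hcrit : G.CriticalSet k B
    · exact ⟨B, subset_rfl, hcrit⟩
    obtain ⟨B', hB', hB'B, hB'k⟩ : ∃ B', B'.Nonempty ∧ B' ⊂ B ∧ #(G.cut B') ≤ k := by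
      simpa [CriticalSet, hB, hBu, hBk] using hcrit
    obtain ⟨A, hAB', hA⟩ := ih B' hB'B hB' (hB'B.trans_subset (subset_univ B)).ne hB'k
    exact ⟨A, hAB'.trans hB'B.subset, hA⟩

theorem succ_le_card_cut_add_card_hits [Fintype V] (G : Multigraph V E) {k t : ℕ}
    (hG : G.EdgeConnected k) (r : Fin t → V) (hhit : ∀ A, G.CriticalSet k A → ∃ i, r i ∈ A)
    {B : Finset V} (hB : B.Nonempty) (hBu : B ≠ univ) :
    k + 1 ≤ #(G.cut B) + #{i | r i ∈ B} := by
  rcases (hG B hB hBu).lt_or_eq with hlt | heq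
  · omega
  obtain ⟨A, hAB, hA⟩ := G.exists_criticalSet_subset k hB hBu heq.ge
  obtain ⟨i, hi⟩ := hhit A hA
  have : 0 < #{j | r j ∈ B} := card_pos.2 ⟨i, by simpa using hAB hi⟩
  omega

theorem stmt_8_general {V E : Type} [Fintype V] [DecidableEq V] [Fintype E] (G : Multigraph V E) (k t : ℕ)
    (hG : G.EdgeConnected k) (A : Fin t → Finset V)
    (hall : ∀ B : Finset V, G.CriticalSet k B ↔ ∃ i, B = A i)
    (r : Fin t → V) (hr : ∀ i, r i ∈ A i) :
    ∀ C : Finset (Option V), C.Nonempty → C ≠ univ →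
      (G.addVertex r).cut C ≠ (G.addVertex r).cut {none} →
      k + 1 ≤ ((G.addVertex r).cut C).card := by
  intro C hC hCu hCx
  wlog hx : none ∉ C generalizing C
  · rw [← cut_compl] at hCx ⊢
    exact this Cᶜ (by rwa [← compl_ne_univ_iff_nonempty, compl_compl])
      ((compl_ne_univ_iff_nonempty C).2 hC) hCx
      (by simpa using not_not.1 hx)
  obtain ⟨B, rfl⟩ : ∃ B : Finset V, C = B.map .some :=
    ⟨C.eraseNone, by rw [map_some_eraseNone, erase_eq_of_notMem hx]⟩
  have hBu : B ≠ univ := by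
    rintro rfl
    refine hCx ?_
    rw [← cut_compl]
    congr
    ext (_ | v) <;> simp
  rw [cut_addVertex_map_some, card_disjSum]
  refine G.succ_le_card_cut_add_card_hits hG r (fun A' hA' => ?_) (by simpa using hC) hBu
  obtain ⟨i, rfl⟩ := (hall A').1 hA'
  exact ⟨i, hr i⟩

/-- Let `A 0, …, A (t-1)` be all the distinct `k`-critical-sets of a
`k`-edge-connected graph `G`, and form `G'` by adding a new vertex `x` joined
by one new edge to a vertex `r i ∈ A i` for each `i`.  Then every edge-cut of
`G'` other than `∂(x)` has at least `k + 1` edges. -/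
theorem stmt_8 {V E : Type} [Fintype V] [DecidableEq V] [Fintype E] [DecidableEq E] (G : Multigraph V E) (k t : ℕ)
    (hG : G.EdgeConnected k) (A : Fin t → Finset V)
    (hinj : Function.Injective A)
    (hall : ∀ B : Finset V, G.CriticalSet k B ↔ ∃ i, B = A i)
    (r : Fin t → V) (hr : ∀ i, r i ∈ A i) :
    ∀ C : Finset (Option V), C.Nonempty → C ≠ univ →
      (G.addVertex r).cut C ≠ (G.addVertex r).cut {none} →
      k + 1 ≤ ((G.addVertex r).cut C).card :=
  stmt_8_general G k t hG A hall r hr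

end Multigraph
end

section
/- A graph G with a vertex x is Z_3-extendable at x if and only if G − x is Z_3-connected. -/
/-!
Split the edges of `G` into the star `∂(x)` and the edges of `G - x`. The net outdegree at `x`
depends only on the orientation of the star, while at `v ≠ x` it is the net outdegree in `G - x`
plus the contribution `s(v)` of the star, and `∑ v, s v = 0`. Hence, once the star is oriented
compatibly with `β x = s x`, the `β`-orientations of `G` extending it are exactly the extensions of
the `(β - s)`-orientations of `G - x`, and `β` is a boundary of `G` iff `β - s` is one of `G - x`.
Every boundary `β'` of `G - x` is of this form, with `β x := s x` and `β v := β' v + s v`.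
-/

open Finset

namespace Multigraph

variable {V E : Type} [Fintype V] [DecidableEq V] [Fintype E] [DecidableEq E]

/-- The graph `G - x`: delete the vertex `x` and all incident edges. -/
def deleteVertex (G : Multigraph V E) (x : V) :
    Multigraph {v : V // v ≠ x} {e : E // ¬ G.Incident x e} where
  fst e := ⟨G.fst e.1, fun h => e.2 (Or.inl h)⟩
  snd e := ⟨G.snd e.1, fun h => e.2 (Or.inr h)⟩
  no_loop e h := G.no_loop e.1 (congrArg Subtype.val h)

end Multigraph

namespace Multigraph

section

variable {V E : Type} [DecidableEq V] (G : Multigraph V E) (D : E → Bool)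

def signedIncidence (v : V) (e : E) : ℤ :=
  (if G.tail D e = v then 1 else 0) - (if G.head D e = v then 1 else 0)

lemma signedIncidence_eq_zero_of_not_incident {x : V} {e : E} (he : ¬ G.Incident x e) :
    G.signedIncidence D x e = 0 := by
  obtain ⟨hfst, hsnd⟩ := not_or.mp he
  cases hDe : D e <;> simp [signedIncidence, tail, head, hDe, hfst, hsnd]

lemma signedIncidence_congr {D D' : E → Bool} (v : V) {e : E} (h : D e = D' e) :
    G.signedIncidence D v e = G.signedIncidence D' v e := by
  unfold signedIncidence tail head
  rw [h]

lemma signedIncidence_deleteVertex (x : V) (v : {v // v ≠ x}) (e : {e // ¬ G.Incident x e}) :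
    (G.deleteVertex x).signedIncidence (fun e => D e) v e = G.signedIncidence D v e := by
  cases h : D e <;> simp [signedIncidence, tail, head, deleteVertex, h, Subtype.ext_iff]

lemma sum_signedIncidence [Fintype V] (e : E) : ∑ v, G.signedIncidence D v e = 0 := by
  simp [signedIncidence, sum_sub_distrib]

variable [Fintype E]

lemma outDeg_sub_inDeg_eq_sum (v : V) :
    G.outDeg D v - G.inDeg D v = ∑ e, G.signedIncidence D v e := by
  simp only [outDeg, inDeg, signedIncidence, sum_sub_distrib, card_filter, Nat.cast_sum,
    Nat.cast_ite, Nat.cast_one, Nat.cast_zero]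

def starNet (x v : V) : ℤ :=
  ∑ e : {e // G.Incident x e}, G.signedIncidence D v e

lemma starNet_congr (x : V) {D D₀ : E → Bool} (hD : ∀ e, G.Incident x e → D e = D₀ e) (v : V) :
    G.starNet D x v = G.starNet D₀ x v :=
  sum_congr rfl fun e _ => G.signedIncidence_congr v (hD e e.2)

lemma sum_starNet [Fintype V] (x : V) : ∑ v, G.starNet D x v = 0 := by
  simp only [starNet]
  rw [sum_comm]
  exact sum_eq_zero fun e _ => G.sum_signedIncidence D e

lemma outDeg_sub_inDeg_eq_starNet_add (x v : V) :
    G.outDeg D v - G.inDeg D v =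
      G.starNet D x v + ∑ e : {e // ¬ G.Incident x e}, G.signedIncidence D v e := by
  rw [outDeg_sub_inDeg_eq_sum, starNet, Fintype.sum_subtype_add_sum_subtype]

lemma outDeg_sub_inDeg_self (x : V) : G.outDeg D x - G.inDeg D x = G.starNet D x x := by
  rw [G.outDeg_sub_inDeg_eq_starNet_add D x,
    sum_eq_zero fun e _ => G.signedIncidence_eq_zero_of_not_incident D e.2, add_zero]

lemma outDeg_sub_inDeg_of_ne (x : V) (v : {v // v ≠ x}) :
    G.outDeg D v - G.inDeg D v = G.starNet D x v +
      ((G.deleteVertex x).outDeg (fun e => D e) v - (G.deleteVertex x).inDeg (fun e => D e) v) := by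
  simp only [G.outDeg_sub_inDeg_eq_starNet_add D x, outDeg_sub_inDeg_eq_sum,
    signedIncidence_deleteVertex]

lemma isBetaOrientation_iff_deleteVertex (x : V) {D₀ : E → Bool}
    (hD : ∀ e, G.Incident x e → D e = D₀ e) (β : V → ZMod 3) :
    G.IsBetaOrientation β D ↔ (G.starNet D₀ x x : ZMod 3) = β x ∧
      (G.deleteVertex x).IsBetaOrientation (fun v => β v - G.starNet D₀ x v) (fun e => D e) := by
  simp only [IsBetaOrientation, Subtype.forall, ← G.starNet_congr x hD]
  constructor
  · intro h
    refine ⟨by rw [← h x, outDeg_sub_inDeg_self], fun v hv => ?_⟩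
    rw [← h v, G.outDeg_sub_inDeg_of_ne D x ⟨v, hv⟩]
    push_cast
    ring
  · rintro ⟨hx, h⟩ v
    by_cases hv : v = x
    · rw [hv, outDeg_sub_inDeg_self, hx]
    · rw [G.outDeg_sub_inDeg_of_ne D x ⟨v, hv⟩, Int.cast_add, h v hv]
      ring

end

lemma isBoundary_restrict_iff {V : Type} [Fintype V] [DecidableEq V] {β s : V → ZMod 3} {x : V}
    (hs : ∑ v, s v = 0) (hx : s x = β x) :
    IsBoundary (fun v : {v // v ≠ x} => β v - s v) ↔ IsBoundary β := by
  have hβ := Fintype.sum_eq_add_sum_subtype_ne β x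
  have hs' := Fintype.sum_eq_add_sum_subtype_ne s x
  simp only [IsBoundary, sum_sub_distrib]
  constructor <;> intro h
  · linear_combination h + hβ - hs' + hs - hx
  · linear_combination h - hβ + hs' - hs + hx

/-- `G` is `ℤ₃`-extendable at `x` if and only if `G - x` is `ℤ₃`-connected. -/
theorem stmt_9 {V E : Type} [Fintype V] [DecidableEq V] [Fintype E] [DecidableEq E] (G : Multigraph V E) (x : V) :
    G.Z3ExtendableAt x ↔ (G.deleteVertex x).Z3Connected := by
  have hsum (D : E → Bool) : ∑ v, (G.starNet D x v : ZMod 3) = 0 := by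
    rw [← Int.cast_sum, sum_starNet, Int.cast_zero]
  constructor
  · intro hext β' hβ'
    -- any orientation of the star will do
    let D₀ : E → Bool := fun _ => true
    let β : V → ZMod 3 := fun v =>
      if hv : v = x then G.starNet D₀ x x else β' ⟨v, hv⟩ + G.starNet D₀ x v
    have hβx : (G.starNet D₀ x x : ZMod 3) = β x := by simp [β]
    have hβ'_eq : (fun v : {v // v ≠ x} => β v - G.starNet D₀ x v) = β' :=
      funext fun v => by simp [β, v.2]
    obtain ⟨D, hDD₀, hD⟩ := hext β ((isBoundary_restrict_iff (hsum D₀) hβx).1 (hβ'_eq ▸ hβ'))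
      D₀ (by rw [outDeg_sub_inDeg_self, hβx])
    exact ⟨_, hβ'_eq ▸ ((G.isBetaOrientation_iff_deleteVertex D x hDD₀ β).1 hD).2⟩
  · intro hconn β hβ D₀ hD₀
    rw [outDeg_sub_inDeg_self] at hD₀
    obtain ⟨D', hD'⟩ := hconn _ ((isBoundary_restrict_iff (hsum D₀) hD₀).2 hβ)
    let D : E → Bool := fun e => if he : G.Incident x e then D₀ e else D' ⟨e, he⟩
    have hDD₀ : ∀ e, G.Incident x e → D e = D₀ e := fun e he => dif_pos he
    have hDD' : (fun e : {e // ¬ G.Incident x e} => D e) = D' := funext fun e => dif_neg e.2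
    exact ⟨D, hDD₀, (G.isBetaOrientation_iff_deleteVertex D x hDD₀ β).2 ⟨hD₀, hDD' ▸ hD'⟩⟩

end Multigraph
end
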